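/- arXiv:1805.01327 — 3 statements merged into one kernel-verified Lean document; each statement's English description precedes it below -/
import Mathlib

section
/- With the pyramid setup, define c_{i,j}^{(r)} = Σ e_{h,k}, summed over pairs (h,k) with row(h) = i, row(k) = j, and col(k) - col(h) + 1 = r. Then the bracket satisfies [c_{i,j}^{(r)}, c_{k,l}^{(s)}] = δ_{j,k} c_{i,l}^{(r+s-1)} - δ_{i,l} c_{k,j}^{(r+s-1)}. -/
/-- Boxes of a pyramid with `n` rows, row `i` having `p i` boxes. -/
abbrev PyrBox (n : ℕ) (p : Fin n → ℕ) : Type := Σ i : Fin n, Fin (p i)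

/-- The column of a box: `o i` is the column of the leftmost box of row `i`. -/
def pyrCol {n : ℕ} {p : Fin n → ℕ} (o : Fin n → ℕ) (b : PyrBox n p) : ℕ :=
  o b.1 + b.2.val

/-- The element `c_{i,j}^{(r)} = Σ e_{h,k}` summed over boxes `h, k` with
`row h = i`, `row k = j` and `col k - col h + 1 = r`. -/
def cPyr (k : Type*) [Field k] {n : ℕ} (p o : Fin n → ℕ) (i j : Fin n) (r : ℕ) :
    Matrix (PyrBox n p) (PyrBox n p) k :=
  ∑ h : PyrBox n p, ∑ m : PyrBox n p,
    if h.1 = i ∧ m.1 = j ∧ pyrCol o m + 1 = pyrCol o h + r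
      then Matrix.single h m 1 else 0

/-- The entry `s_{i,j}` of the shift matrix of the pyramid (the indentation of
row `i` relative to row `j`). -/
def sShift {n : ℕ} (p o : Fin n → ℕ) (i j : Fin n) : ℤ :=
  max ((o j : ℤ) - (o i : ℤ)) (((o j : ℤ) + (p j : ℤ)) - ((o i : ℤ) + (p i : ℤ)))

/-! Each `c_{i,j}^{(r)}` is the 0/1-matrix of an incidence relation between boxes, so an entry
of a product of two of them counts intermediate boxes. Such a box lies in a prescribed row and
column, hence is unique, and the bounds `s_{i,j} < r`, `s_{i',j'} < s` are exactly what puts that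
column inside the row. Nesting makes the shifts nonnegative, so `r + s - 1` is not truncated. -/

theorem Matrix.of_boole_mul_of_boole_apply {l m n α : Type*} [Fintype m] [NonAssocSemiring α]
    (R : l → m → Prop) (S : m → n → Prop) [∀ a c, Decidable (R a c)] [∀ c b, Decidable (S c b)]
    (a : l) (b : n) (huniq : ∀ c c', R a c → S c b → R a c' → S c' b → c = c') :
    (of (fun x y => if R x y then (1 : α) else 0) *
        of (fun x y => if S x y then (1 : α) else 0)) a b =
      if ∃ c, R a c ∧ S c b then 1 else 0 := by
  classical
  simp only [mul_apply, of_apply, ite_zero_mul_ite_zero, mul_one]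
  split_ifs with h
  · obtain ⟨c, hc⟩ := h
    rw [Fintype.sum_eq_single c fun c' hc' =>
      if_neg fun h' => hc' (huniq _ _ h'.1 h'.2 hc.1 hc.2), if_pos hc]
  · exact Fintype.sum_eq_zero _ fun c => if_neg fun hc => h ⟨c, hc⟩

section Pyramid

variable {n : ℕ} {p : Fin n → ℕ} (o : Fin n → ℕ)

def PyrRel (i j : Fin n) (r : ℕ) (a b : PyrBox n p) : Prop :=
  a.1 = i ∧ b.1 = j ∧ pyrCol o b + 1 = pyrCol o a + r

instance (i j : Fin n) (r : ℕ) (a b : PyrBox n p) : Decidable (PyrRel o i j r a b) :=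
  inferInstanceAs (Decidable (_ ∧ _))

theorem cPyr_eq_of (k : Type*) [Field k] (i j : Fin n) (r : ℕ) :
    cPyr k p o i j r = Matrix.of fun a b => if PyrRel o i j r a b then 1 else 0 := by
  conv_rhs => rw [Matrix.matrix_eq_sum_single (Matrix.of _)]
  unfold cPyr
  congr! with a _ b _
  rw [Matrix.of_apply]
  by_cases h : PyrRel o i j r a b
  · rw [if_pos h]; exact if_pos h
  · rw [if_neg h, Matrix.single_zero]; exact if_neg h

theorem le_pyrCol (b : PyrBox n p) : o b.1 ≤ pyrCol o b :=
  Nat.le_add_right _ _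

theorem pyrCol_lt (b : PyrBox n p) : pyrCol o b < o b.1 + p b.1 :=
  Nat.add_lt_add_left b.2.isLt _

theorem PyrBox.ext_of_pyrCol {b c : PyrBox n p} (hrow : b.1 = c.1)
    (hcol : pyrCol o b = pyrCol o c) : b = c := by
  obtain ⟨i, x⟩ := b
  obtain ⟨j, y⟩ := c
  obtain rfl : i = j := hrow
  simpa [pyrCol, Fin.ext_iff] using hcol

theorem exists_pyrBox_pyrCol_eq {j : Fin n} {x : ℕ} (h₁ : o j ≤ x) (h₂ : x < o j + p j) :
    ∃ c : PyrBox n p, c.1 = j ∧ pyrCol o c = x :=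
  ⟨⟨j, ⟨x - o j, by omega⟩⟩, rfl, by simp only [pyrCol]; omega⟩

variable {o} {i j i' j' : Fin n} {r s : ℕ}

theorem exists_pyrRel_pyrRel_iff (hr : o j < o i + r) (hs : o j' + p j' < o i' + p i' + s)
    (hrs : 0 < r + s) (a b : PyrBox n p) :
    (∃ c, PyrRel o i j r a c ∧ PyrRel o i' j' s c b) ↔ j = i' ∧ PyrRel o i j' (r + s - 1) a b := by
  constructor
  · rintro ⟨c, ⟨ha, hc, hac⟩, hc', hb, hcb⟩
    exact ⟨hc ▸ hc', ha, hb, by omega⟩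
  · rintro ⟨rfl, ha, hb, hab⟩
    have ha' : o i ≤ pyrCol o a := ha ▸ le_pyrCol o a
    have hb' : pyrCol o b < o j' + p j' := hb ▸ pyrCol_lt o b
    obtain ⟨c, hc, hcol⟩ := exists_pyrBox_pyrCol_eq (p := p) o (j := j)
      (x := pyrCol o a + r - 1) (by omega) (by omega)
    exact ⟨c, ⟨ha, hc, by omega⟩, hc, hb, by omega⟩

theorem cPyr_mul_cPyr (k : Type*) [Field k] (hr : o j < o i + r)
    (hs : o j' + p j' < o i' + p i' + s) (hrs : 0 < r + s) :
    cPyr k p o i j r * cPyr k p o i' j' s = if j = i' then cPyr k p o i j' (r + s - 1) else 0 := by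
  ext a b
  have huniq : ∀ c c', PyrRel o i j r a c → PyrRel o i' j' s c b →
      PyrRel o i j r a c' → PyrRel o i' j' s c' b → c = c' :=
    fun _ _ ⟨_, hc, hac⟩ _ ⟨_, hc', hac'⟩ _ =>
      PyrBox.ext_of_pyrCol o (hc.trans hc'.symm) (by omega)
  rw [cPyr_eq_of, cPyr_eq_of, Matrix.of_boole_mul_of_boole_apply _ _ _ _ huniq]
  simp only [exists_pyrRel_pyrRel_iff hr hs hrs]
  by_cases hj : j = i' <;> simp [hj, cPyr_eq_of]

end Pyramid

theorem sShift_nonneg {n : ℕ} (p o : Fin n → ℕ)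
    (hnest : ∀ i j : Fin n, p i ≤ p j → o j ≤ o i ∧ o i + p i ≤ o j + p j)
    (i j : Fin n) : 0 ≤ sShift p o i j := by
  rw [sShift, le_max_iff]
  rcases le_total (p i) (p j) with h | h
  · right; have := hnest i j h; omega
  · left; have := hnest j i h; omega

/-- the bracket relation
`[c_{i,j}^{(r)}, c_{i',j'}^{(s)}] = δ_{j,i'} c_{i,j'}^{(r+s-1)} - δ_{i,j'} c_{i',j}^{(r+s-1)}`. -/
theorem cPyr_bracket {k : Type*} [Field k] {n : ℕ} (p o : Fin n → ℕ)
    (hnest : ∀ i j : Fin n, p i ≤ p j → o j ≤ o i ∧ o i + p i ≤ o j + p j)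
    (i j i' j' : Fin n) (r s : ℕ)
    (hr : sShift p o i j < (r : ℤ)) (hs : sShift p o i' j' < (s : ℤ)) :
    ⁅cPyr k p o i j r, cPyr k p o i' j' s⁆ =
      (if j = i' then cPyr k p o i j' (r + s - 1) else 0)
        - (if i = j' then cPyr k p o i' j (r + s - 1) else 0) := by
  have hr₀ : (0 : ℤ) < r := (sShift_nonneg p o hnest i j).trans_lt hr
  rw [sShift, max_lt_iff] at hr hs
  rw [Ring.lie_def, cPyr_mul_cPyr k (by omega) (by omega) (by omega),
    cPyr_mul_cPyr k (by omega) (by omega) (by omega), add_comm s r]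
  simp only [@eq_comm _ j' i]
end

section
/- With the pyramid setup, each element c_{i,j}^{(r)} (for s_{i,j} < r ≤ s_{i,j} + p_{min(i,j)}) commutes with the nilpotent element e = Σ_{row(i)=row(j), col(i)=col(j)-1} e_{i,j}, i.e. [c_{i,j}^{(r)}, e] = 0. -/
/-- The nilpotent element `e` determined by the pyramid. -/
def ePyr (k : Type*) [Field k] {n : ℕ} (p o : Fin n → ℕ) :
    Matrix (PyrBox n p) (PyrBox n p) k :=
  ∑ a : PyrBox n p, ∑ b : PyrBox n p,
    if a.1 = b.1 ∧ pyrCol o a + 1 = pyrCol o b then Matrix.single a b 1 else 0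

/-!
Multiplying by `e` moves a box one column along its row. Hence `c_{i,j}^{(r)} e` and
`e c_{i,j}^{(r)}` are both the part of `c_{i,j}^{(r+1)}` whose boxes admit the required neighbour:
a left neighbour of the box in row `j`, resp. a right neighbour of the box in row `i`.
The inequality `s_{i,j} < r` guarantees that these neighbours always exist, so both products
equal `c_{i,j}^{(r+1)}` and the commutator vanishes.
-/

open Matrix

namespace Matrix

variable {l m n R : Type*}

open Classical in
noncomputable def ofRel [Zero R] [One R] (r : m → n → Prop) : Matrix m n R :=
  of fun a b => if r a b then 1 else 0

theorem ofRel_apply [Zero R] [One R] (r : m → n → Prop) [DecidableRel r] (a : m) (b : n) :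
    (ofRel r : Matrix m n R) a b = if r a b then 1 else 0 := by
  simp only [ofRel, of_apply]
  congr!

theorem sum_sum_single_ite_eq_ofRel [Fintype m] [Fintype n] [DecidableEq m] [DecidableEq n]
    [AddCommMonoid R] [One R]
    (r : m → n → Prop) [DecidableRel r] :
    ∑ a, ∑ b, (if r a b then single a b (1 : R) else 0) = ofRel r := by
  ext x y
  simp only [sum_apply, apply_ite (fun M : Matrix m n R => M x y), single_apply, zero_apply,
    ofRel_apply]
  rw [Fintype.sum_eq_single x, Fintype.sum_eq_single y] <;> aesop

theorem ofRel_mul_ofRel_apply [Fintype m] [NonAssocSemiring R] (r : l → m → Prop)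
    (s : m → n → Prop)
    {x : l} {z : n} (huniq : ∀ y y', r x y ∧ s y z → r x y' ∧ s y' z → y = y') :
    ((ofRel r : Matrix l m R) * (ofRel s : Matrix m n R)) x z = ofRel (Relation.Comp r s) x z := by
  classical
  simp only [Matrix.mul_apply, ofRel_apply, ite_zero_mul_ite_zero, mul_one]
  by_cases h : Relation.Comp r s x z
  · obtain ⟨y, hy⟩ := h
    rw [Fintype.sum_eq_single y fun y' hy' => if_neg fun h' => hy' (huniq _ _ h' hy), if_pos hy,
      if_pos ⟨y, hy⟩]
  · rw [if_neg h]
    exact Finset.sum_eq_zero fun y _ => if_neg fun hy => h ⟨y, hy⟩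

theorem ofRel_mul_ofRel_of_leftUnique [Fintype m] [NonAssocSemiring R] {r : l → m → Prop}
    {s : m → n → Prop} (hs : Relator.LeftUnique s) :
    ((ofRel r : Matrix l m R) * (ofRel s : Matrix m n R)) = ofRel (Relation.Comp r s) := by
  ext x z
  exact ofRel_mul_ofRel_apply r s fun _ _ h h' => hs h.2 h'.2

theorem ofRel_mul_ofRel_of_rightUnique [Fintype m] [NonAssocSemiring R] {r : l → m → Prop}
    {s : m → n → Prop} (hr : Relator.RightUnique r) :
    ((ofRel r : Matrix l m R) * (ofRel s : Matrix m n R)) = ofRel (Relation.Comp r s) := by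
  ext x z
  exact ofRel_mul_ofRel_apply r s fun _ _ h h' => hr h.1 h'.1

end Matrix

namespace PyrBox

variable {n : ℕ} {p : Fin n → ℕ} (o : Fin n → ℕ)

def IsRightNeighbor (a b : PyrBox n p) : Prop :=
  a.1 = b.1 ∧ pyrCol o a + 1 = pyrCol o b

def IsCEntry (i j : Fin n) (r : ℕ) (h m : PyrBox n p) : Prop :=
  h.1 = i ∧ m.1 = j ∧ pyrCol o m + 1 = pyrCol o h + r

instance : DecidableRel (IsRightNeighbor (p := p) o) :=
  fun _ _ => inferInstanceAs (Decidable (_ ∧ _))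

instance (i j : Fin n) (r : ℕ) : DecidableRel (IsCEntry (p := p) o i j r) :=
  fun _ _ => inferInstanceAs (Decidable (_ ∧ _))

variable {o}

theorem eq_of_pyrCol_eq {a b : PyrBox n p} (hrow : a.1 = b.1) (hcol : pyrCol o a = pyrCol o b) :
    a = b := by
  obtain ⟨i, a⟩ := a
  obtain ⟨i', b⟩ := b
  obtain rfl : i = i' := hrow
  simp only [pyrCol, Nat.add_left_cancel_iff] at hcol
  rw [Fin.ext hcol]

theorem isRightNeighbor_leftUnique : Relator.LeftUnique (IsRightNeighbor (p := p) o) :=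
  fun _ _ _ ha hb =>
    eq_of_pyrCol_eq (ha.1.trans hb.1.symm) (Nat.succ_injective (ha.2.trans hb.2.symm))

theorem isRightNeighbor_rightUnique : Relator.RightUnique (IsRightNeighbor (p := p) o) :=
  fun _ _ _ ha hb => eq_of_pyrCol_eq (ha.1.symm.trans hb.1) (ha.2.symm.trans hb.2)

theorem exists_isRightNeighbor_of_pos (b : PyrBox n p) (hb : 0 < b.2.val) :
    ∃ a, IsRightNeighbor o a b :=
  ⟨⟨b.1, b.2.val - 1, by omega⟩, rfl, by simp only [pyrCol]; omega⟩

theorem exists_isRightNeighbor_of_succ_lt (a : PyrBox n p) (ha : a.2.val + 1 < p a.1) :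
    ∃ b, IsRightNeighbor o a b :=
  ⟨⟨a.1, a.2.val + 1, ha⟩, rfl, by simp only [pyrCol]; omega⟩

theorem comp_isCEntry_isRightNeighbor {i j : Fin n} {r : ℕ} (h : o j < o i + r) :
    Relation.Comp (IsCEntry o i j r) (IsRightNeighbor (p := p) o) = IsCEntry o i j (r + 1) := by
  ext x y
  constructor
  · rintro ⟨m, ⟨hx, hm, hxm⟩, hmy, hmy'⟩
    exact ⟨hx, hmy ▸ hm, by omega⟩
  · rintro ⟨rfl, rfl, hxy⟩
    have hy : 0 < y.2.val := by simp only [pyrCol] at hxy; omega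
    obtain ⟨m, hrow, hcol⟩ := exists_isRightNeighbor_of_pos (o := o) y hy
    exact ⟨m, ⟨rfl, hrow, by omega⟩, hrow, hcol⟩

theorem comp_isRightNeighbor_isCEntry {i j : Fin n} {r : ℕ} (h : o j + p j < o i + p i + r) :
    Relation.Comp (IsRightNeighbor o) (IsCEntry (p := p) o i j r) = IsCEntry o i j (r + 1) := by
  ext x y
  constructor
  · rintro ⟨m, ⟨hxm, hxm'⟩, hm, hy, hmy⟩
    exact ⟨hxm ▸ hm, hy, by omega⟩
  · rintro ⟨rfl, rfl, hxy⟩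
    have hx : x.2.val + 1 < p x.1 := by simp only [pyrCol] at hxy; have := y.2.isLt; omega
    obtain ⟨m, hrow, hcol⟩ := exists_isRightNeighbor_of_succ_lt (o := o) x hx
    exact ⟨m, ⟨hrow, hcol⟩, hrow.symm, rfl, by omega⟩

end PyrBox

open PyrBox

theorem ePyr_eq_ofRel (k : Type*) [Field k] {n : ℕ} (p o : Fin n → ℕ) :
    ePyr k p o = ofRel (IsRightNeighbor o) :=
  sum_sum_single_ite_eq_ofRel (IsRightNeighbor o)

theorem cPyr_eq_ofRel (k : Type*) [Field k] {n : ℕ} (p o : Fin n → ℕ) (i j : Fin n)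
    (r : ℕ) :
    cPyr k p o i j r = ofRel (IsCEntry o i j r) :=
  sum_sum_single_ite_eq_ofRel (IsCEntry o i j r)

theorem cPyr_mul_ePyr {k : Type*} [Field k] {n : ℕ} {p o : Fin n → ℕ} {i j : Fin n} {r : ℕ}
    (h : o j < o i + r) : cPyr k p o i j r * ePyr k p o = cPyr k p o i j (r + 1) := by
  rw [cPyr_eq_ofRel, ePyr_eq_ofRel, ofRel_mul_ofRel_of_leftUnique isRightNeighbor_leftUnique,
    comp_isCEntry_isRightNeighbor h, cPyr_eq_ofRel]

theorem ePyr_mul_cPyr {k : Type*} [Field k] {n : ℕ} {p o : Fin n → ℕ} {i j : Fin n} {r : ℕ}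
    (h : o j + p j < o i + p i + r) : ePyr k p o * cPyr k p o i j r = cPyr k p o i j (r + 1) := by
  rw [cPyr_eq_ofRel, ePyr_eq_ofRel, ofRel_mul_ofRel_of_rightUnique isRightNeighbor_rightUnique,
    comp_isRightNeighbor_isCEntry h, cPyr_eq_ofRel]

theorem cPyr_commutes_with_e_general {k : Type*} [Field k] {n : ℕ} (p o : Fin n → ℕ)
    (i j : Fin n) (r : ℕ)
    (h1 : sShift p o i j < (r : ℤ)) :
    ⁅cPyr k p o i j r, ePyr k p o⁆ = 0 := by
  rw [sShift, max_lt_iff] at h1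
  rw [Ring.lie_def, cPyr_mul_ePyr (by omega), ePyr_mul_cPyr (by omega), sub_self]

/-- each `c_{i,j}^{(r)}` with `s_{i,j} < r ≤ s_{i,j} + p_{min(i,j)}`
commutes with the nilpotent element `e` of the pyramid. -/
theorem cPyr_commutes_with_e {k : Type*} [Field k] {n : ℕ} (p o : Fin n → ℕ)
    (hnest : ∀ i j : Fin n, p i ≤ p j → o j ≤ o i ∧ o i + p i ≤ o j + p j)
    (i j : Fin n) (r : ℕ)
    (h1 : sShift p o i j < (r : ℤ))
    (h2 : (r : ℤ) ≤ sShift p o i j + (min (p i) (p j) : ℤ)) :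
    ⁅cPyr k p o i j r, ePyr k p o⁆ = 0 :=
  cPyr_commutes_with_e_general p o i j r h1
end

section
/- Define ρ = -Σ_{i=1}^N i·ε_i, ρ̄ = -Σ_{i=1}^N ((q_1+…+q_{col(i)-1}) + row(i) - (n - q_{col(i)}))·ε_i, and γ = Σ_{α ∈ Φ(-)_+} α, where Φ(-)_+ = {ε_i - ε_j : col(i) > col(j), row(i) < row(j)}. Then ρ = ρ̄ + γ as elements of the weight lattice ℤ^N. -/
/-! Box `i` is preceded by `i` boxes. Adding to these the boxes strictly below and to the left of
`i` gives exactly the boxes of the columns left of `i` (`q_1 + ⋯ + q_{col(i)-1}` of them), the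
boxes above `i` in its own column (`row(i) - (n - q_{col(i)}) - 1` of them, as columns are
bottom-justified), and the boxes strictly above and to the right of `i`. The two corner counts
are the two contributions of `Φ(-)_+` to the `i`-th coordinate of `γ`. -/

open Finset

theorem Finset.eq_Ioc_sub_card_of_subset_Icc {t : Finset ℕ} {n : ℕ} (ht : t ⊆ Icc 1 n)
    (hsub : Ioc (n - #t) n ⊆ t) : t = Ioc (n - #t) n := by
  have hcard : #t ≤ n := by simpa using card_le_card ht
  exact (eq_of_subset_of_card_le hsub (by simp; omega)).symm

section Pyramid

variable {N n : ℕ} {row col : Fin N → ℕ}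

theorem card_Iio_add_card_below_left
    (horder : ∀ i j : Fin N, i < j ↔ (row i < row j ∨ (row i = row j ∧ col i < col j)))
    (i : Fin N) :
    #(Iio i) + #{j | col j < col i ∧ row i < row j} =
      #{j | col j < col i} + #{j | col j = col i ∧ row j < row i} +
        #{j | col i < col j ∧ row j < row i} := by
  simp only [← filter_gt_eq_Iio, card_filter, ← sum_add_distrib]
  refine sum_congr rfl fun j _ => ?_
  simp only [horder]
  split_ifs <;> omega

theorem card_col_lt_eq_sum (hcol : ∀ i, 1 ≤ col i) (c : ℕ) :
    #{j | col j < c} = ∑ c' ∈ Ico 1 c, #{j | col j = c'} := by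
  rw [card_eq_sum_card_fiberwise (f := col) (t := Ico 1 c)]
  · refine sum_congr rfl fun c' hc' => congrArg card ?_
    rw [filter_filter]
    exact filter_congr fun j _ => by grind
  · intro j hj
    simp only [coe_filter, mem_univ, true_and] at hj
    simpa using ⟨hcol j, hj⟩

theorem injOn_row_col_eq (hinj : ∀ i j, row i = row j → col i = col j → i = j) (c : ℕ) :
    Set.InjOn row ({j | col j = c} : Finset (Fin N)) := by
  intro a ha b hb hab
  simp only [mem_coe, mem_filter, mem_univ, true_and] at ha hb
  exact hinj a b hab (ha.trans hb.symm)

theorem image_row_col_eq (hrow : ∀ i, 1 ≤ row i ∧ row i ≤ n)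
    (hinj : ∀ i j, row i = row j → col i = col j → i = j) {q : ℕ → ℕ}
    (hq : ∀ c, q c = #{i | col i = c})
    (hcolbot : ∀ (i : Fin N) (r : ℕ), n - q (col i) < r → r ≤ n →
      ∃ j, col j = col i ∧ row j = r) (i : Fin N) :
    ({j | col j = col i} : Finset (Fin N)).image row = Ioc (n - q (col i)) n := by
  have hcard : #(({j | col j = col i} : Finset (Fin N)).image row) = q (col i) := by
    rw [card_image_of_injOn (injOn_row_col_eq hinj _), hq]
  rw [← hcard]
  apply eq_Ioc_sub_card_of_subset_Icc
  · intro r hr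
    obtain ⟨j, -, rfl⟩ := mem_image.mp hr
    exact mem_Icc.mpr (hrow j)
  · intro r hr
    rw [hcard, mem_Ioc] at hr
    obtain ⟨j, hj, rfl⟩ := hcolbot i r hr.1 hr.2
    exact mem_image_of_mem row (by simpa using hj)

theorem card_col_eq_row_lt (hrow : ∀ i, 1 ≤ row i ∧ row i ≤ n)
    (hinj : ∀ i j, row i = row j → col i = col j → i = j) {q : ℕ → ℕ}
    (hq : ∀ c, q c = #{i | col i = c})
    (hcolbot : ∀ (i : Fin N) (r : ℕ), n - q (col i) < r → r ≤ n →
      ∃ j, col j = col i ∧ row j = r) (i : Fin N) :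
    (#{j | col j = col i ∧ row j < row i} : ℤ) = row i - (n - q (col i)) - 1 := by
  have himg := image_row_col_eq hrow hinj hq hcolbot i
  have hinjOn := injOn_row_col_eq hinj (col i)
  have hqn : q (col i) ≤ n := by
    have := congrArg card himg
    rw [card_image_of_injOn hinjOn, ← hq, Nat.card_Ioc] at this
    omega
  have hri : row i ∈ Ioc (n - q (col i)) n := himg ▸ mem_image_of_mem row (by simp)
  rw [mem_Ioc] at hri
  have hcard : #{j | col j = col i ∧ row j < row i} = #(Ioo (n - q (col i)) (row i)) :=
    calc #{j | col j = col i ∧ row j < row i}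
        = #((({j | col j = col i} : Finset (Fin N)).filter (row · < row i)).image row) := by
          rw [filter_filter, card_image_of_injOn (hinjOn.mono fun j hj => by simp_all)]
      _ = #((({j | col j = col i} : Finset (Fin N)).image row).filter (· < row i)) := by
          rw [filter_image]
      _ = #(Ioo (n - q (col i)) (row i)) := by
          rw [himg]
          congr 1
          ext r
          simp only [mem_filter, mem_Ioc, mem_Ioo]
          omega
  rw [hcard, Nat.card_Ioo]
  omega

end Pyramid

theorem rho_eq_rhoBar_add_gamma_general {N n : ℕ} (row col : Fin N → ℕ)
    (hrow : ∀ i, 1 ≤ row i ∧ row i ≤ n)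
    (hcol : ∀ i, 1 ≤ col i)
    -- boxes are numbered along rows, from the top row downwards
    (horder : ∀ i j : Fin N, i < j ↔
      (row i < row j ∨ (row i = row j ∧ col i < col j)))
    -- a box is determined by its row and column
    (hinj : ∀ i j, row i = row j → col i = col j → i = j)
    -- `q c` is the number of boxes in column `c`
    (q : ℕ → ℕ)
    (hq : ∀ c, q c = (Finset.univ.filter fun i => col i = c).card)
    -- each column occupies the bottom `q c` rows consecutively
    (hcolbot : ∀ (i : Fin N) (r : ℕ), n - q (col i) < r → r ≤ n →
      ∃ j, col j = col i ∧ row j = r) :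
    ∀ i : Fin N,
      -(((i : ℕ) : ℤ) + 1) =
        -((∑ c ∈ Finset.Ico 1 (col i), (q c : ℤ)) + (row i : ℤ)
            - ((n : ℤ) - (q (col i) : ℤ)))
          + (((Finset.univ.filter fun j : Fin N =>
                col j < col i ∧ row i < row j).card : ℤ)
            - ((Finset.univ.filter fun j : Fin N =>
                col i < col j ∧ row j < row i).card : ℤ)) := by
  intro i
  have hsplit := card_Iio_add_card_below_left horder i
  have habove := card_col_eq_row_lt hrow hinj hq hcolbot i
  have hleft : ∑ c ∈ Ico 1 (col i), (q c : ℤ) = #{j | col j < col i} := by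
    rw [card_col_lt_eq_sum hcol]
    push_cast [hq]
    rfl
  rw [Fin.card_Iio] at hsplit
  rw [hleft]
  omega

/-- the combinatorial identity `ρ = ρ̄ + γ` in `ℤ^N`, where for a
pyramid with boxes numbered `1,…,N` along rows from top to bottom:
`ρ_i = -i`, `ρ̄_i = -((q_1 + … + q_{col(i)-1}) + row(i) - (n - q_{col(i)}))`,
and `γ = Σ_{α ∈ Φ(-)_+} α` with
`Φ(-)_+ = {ε_i - ε_j : col(i) > col(j), row(i) < row(j)}`. -/
theorem rho_eq_rhoBar_add_gamma {N n : ℕ} (row col : Fin N → ℕ)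
    (hrow : ∀ i, 1 ≤ row i ∧ row i ≤ n)
    (hcol : ∀ i, 1 ≤ col i)
    -- boxes are numbered along rows, from the top row downwards
    (horder : ∀ i j : Fin N, i < j ↔
      (row i < row j ∨ (row i = row j ∧ col i < col j)))
    -- a box is determined by its row and column
    (hinj : ∀ i j, row i = row j → col i = col j → i = j)
    -- each row occupies consecutive columns
    (hrowint : ∀ i j c, row i = row j → col i ≤ c → c ≤ col j →
      ∃ m, row m = row i ∧ col m = c)
    -- `q c` is the number of boxes in column `c`
    (q : ℕ → ℕ)
    (hq : ∀ c, q c = (Finset.univ.filter fun i => col i = c).card)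
    -- each column occupies the bottom `q c` rows consecutively
    (hcolbot : ∀ (i : Fin N) (r : ℕ), n - q (col i) < r → r ≤ n →
      ∃ j, col j = col i ∧ row j = r) :
    ∀ i : Fin N,
      -(((i : ℕ) : ℤ) + 1) =
        -((∑ c ∈ Finset.Ico 1 (col i), (q c : ℤ)) + (row i : ℤ)
            - ((n : ℤ) - (q (col i) : ℤ)))
          + (((Finset.univ.filter fun j : Fin N =>
                col j < col i ∧ row i < row j).card : ℤ)
            - ((Finset.univ.filter fun j : Fin N =>
                col i < col j ∧ row j < row i).card : ℤ)) :=
  rho_eq_rhoBar_add_gamma_general row col hrow hcol horder hinj q hq hcolbot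
end
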